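/- arXiv:2311.08183 — 2 statements merged into one kernel-verified Lean document; each statement's English description precedes it below -/
import Mathlib

section
/- Let ρ = (1-ε)|ψ⟩⟨ψ| + ε Σ_k λ_k |ψ_k⟩⟨ψ_k| be a density matrix where {|ψ⟩} ∪ {|ψ_k⟩} is an orthonormal family, 0 < ε < 1/2, λ_k ≥ 0 with Σ_k λ_k = 1, and O is a Hermitian operator with operator norm at most 1. Then |Tr(ρⁿ O)/Tr(ρⁿ) − ⟨ψ|O|ψ⟩| ≤ 2(ε/(1−ε))ⁿ for every n ≥ 1. -/
open Matrix BigOperators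

/-!
Index `ψ` and the `ψk` jointly by `Option ι`. The rank-one projections onto an orthonormal family
are orthogonal idempotents, so `ρ = ∑ cᵢ Pᵢ` gives `ρⁿ = ∑ cᵢⁿ Pᵢ`, and `Tr(ρⁿ O) / Tr(ρⁿ)` is the
average of the expectation values `⟨vᵢ, O vᵢ⟩ ∈ 𝔻` with weights `cᵢⁿ`. The weight of `ψ` is
`(1 - ε)ⁿ`, the others add up to at most `εⁿ ∑ λₖⁿ ≤ εⁿ`, and each deviation from `⟨ψ, O ψ⟩` is at
most `2`.
-/

theorem OrthogonalIdempotents.sum_smul_pow {S A I : Type*} [CommSemiring S] [Semiring A]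
    [Algebra S A] [Fintype I] {e : I → A} (he : OrthogonalIdempotents e) (c : I → S)
    {n : ℕ} (hn : n ≠ 0) : (∑ i, c i • e i) ^ n = ∑ i, c i ^ n • e i := by
  classical
  induction n with
  | zero => exact absurd rfl hn
  | succ m ih =>
    rcases eq_or_ne m 0 with rfl | hm
    · simp
    rw [pow_succ, ih hm, Finset.sum_mul]
    refine Finset.sum_congr rfl fun i _ => ?_
    simp [Finset.mul_sum, he.mul_eq, smul_smul, pow_succ']

theorem pairwise_star_dotProduct_option_elim {R n ι : Type*} [CommSemiring R] [StarRing R]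
    [Fintype n] {u : n → R} {w : ι → n → R} (hu : ∀ k, star u ⬝ᵥ w k = 0)
    (hw : Pairwise fun k k' => star (w k) ⬝ᵥ w k' = 0) :
    Pairwise fun i j : Option ι => star (i.elim u w) ⬝ᵥ j.elim u w = 0 := by
  rintro (_ | k) (_ | k') hkk' <;> simp only [Option.elim]
  · exact absurd rfl hkk'
  · exact hu k'
  · rw [star_dotProduct, hu k, star_zero]
  · exact hw fun h => hkk' (congrArg some h)

theorem orthogonalIdempotents_vecMulVec_star {R n I : Type*} [CommSemiring R] [StarRing R]
    [Fintype n] [DecidableEq n] {v : I → n → R} (hv : ∀ i, star (v i) ⬝ᵥ v i = 1)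
    (hv' : Pairwise fun i j => star (v i) ⬝ᵥ v j = 0) :
    OrthogonalIdempotents fun i => vecMulVec (v i) (star (v i)) where
  idem i := by simp [IsIdempotentElem, vecMulVec_mul_vecMulVec, hv i]
  ortho i j hij := by simp [vecMulVec_mul_vecMulVec, hv' hij]

theorem trace_vecMulVec_mul {R n : Type*} [CommSemiring R] [Fintype n] (a b : n → R)
    (M : Matrix n n R) : (vecMulVec a b * M).trace = b ⬝ᵥ (M *ᵥ a) := by
  rw [vecMulVec_mul, trace_vecMulVec, dotProduct_mulVec, dotProduct_comm]

theorem trace_sum_smul_vecMulVec_star_mul {R n I : Type*} [CommSemiring R] [StarRing R]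
    [Fintype n] [Fintype I] (c : I → R) (v : I → n → R) (M : Matrix n n R) :
    ((∑ i, c i • vecMulVec (v i) (star (v i))) * M).trace
      = ∑ i, c i * (star (v i) ⬝ᵥ (M *ᵥ v i)) := by
  simp [Finset.sum_mul, trace_sum, trace_vecMulVec_mul]

theorem sum_pow_le_one {ι R : Type*} [Fintype ι] [CommSemiring R] [PartialOrder R]
    [IsOrderedRing R] {w : ι → R} (hw : ∀ i, 0 ≤ w i) (hsum : ∑ i, w i = 1) {n : ℕ}
    (hn : n ≠ 0) : ∑ i, w i ^ n ≤ 1 := by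
  calc ∑ i, w i ^ n ≤ ∑ i, w i := Finset.sum_le_sum fun i _ =>
        pow_le_of_le_one (hw i) (hsum ▸ Finset.single_le_sum (fun j _ => hw j)
          (Finset.mem_univ i)) hn
    _ = 1 := hsum

theorem norm_weighted_mean_sub_le {𝕜 κ : Type*} [RCLike 𝕜] [Fintype κ] {w : Option κ → ℝ}
    (hw : ∀ i, 0 ≤ w i) (hw₀ : 0 < w none) {z : Option κ → 𝕜} (hz : ∀ i, ‖z i‖ ≤ 1) :
    ‖(∑ i, (w i : 𝕜) * z i) / (∑ i, (w i : 𝕜)) - z none‖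
      ≤ 2 * (∑ k, w (some k)) / w none := by
  have hW : w none ≤ ∑ i, w i := Finset.single_le_sum (fun i _ => hw i) (Finset.mem_univ _)
  have hW' : 0 ≤ ∑ k, w (some k) := Finset.sum_nonneg fun k _ => hw _
  have hW₀ : (∑ i, (w i : 𝕜)) ≠ 0 := by
    rw [← RCLike.ofReal_sum]; exact_mod_cast (hw₀.trans_le hW).ne'
  have hdiff : (∑ i, (w i : 𝕜) * z i) / (∑ i, (w i : 𝕜)) - z none
      = (∑ k, (w (some k) : 𝕜) * (z (some k) - z none)) / (∑ i, (w i : 𝕜)) := by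
    rw [div_sub' hW₀]
    simp only [Fintype.sum_option, mul_sub, Finset.sum_sub_distrib, ← Finset.sum_mul]
    ring
  have hnum : ‖∑ k, (w (some k) : 𝕜) * (z (some k) - z none)‖ ≤ 2 * ∑ k, w (some k) := by
    rw [Finset.mul_sum]
    refine (norm_sum_le _ _).trans (Finset.sum_le_sum fun k _ => ?_)
    rw [norm_mul, RCLike.norm_of_nonneg (hw _), mul_comm]
    have := norm_sub_le (z (some k)) (z none)
    exact mul_le_mul_of_nonneg_right (by linarith [hz (some k), hz none]) (hw _)
  rw [hdiff, norm_div, ← RCLike.ofReal_sum, RCLike.norm_of_nonneg (hw₀.le.trans hW)]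
  calc _ ≤ 2 * (∑ k, w (some k)) / ∑ i, w i := by gcongr; exact hw₀.le.trans hW
    _ ≤ 2 * (∑ k, w (some k)) / w none := by gcongr

theorem stmt_0_general {d : ℕ} {ι : Type*} [Fintype ι]
    (ε : ℝ) (hε : 0 < ε) (hε2 : ε < 1/2)
    (lam : ι → ℝ) (hlam : ∀ k, 0 ≤ lam k) (hsum : ∑ k, lam k = 1)
    (ψ : Fin d → ℂ) (ψk : ι → Fin d → ℂ)
    (hψ : star ψ ⬝ᵥ ψ = 1)
    (hψk : ∀ k, star (ψk k) ⬝ᵥ ψk k = 1)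
    (hortho : ∀ k, star ψ ⬝ᵥ ψk k = 0)
    (hortho' : ∀ k k', k ≠ k' → star (ψk k) ⬝ᵥ ψk k' = 0)
    (O : Matrix (Fin d) (Fin d) ℂ)
    (hOnorm : ∀ v : Fin d → ℂ, ‖star v ⬝ᵥ (O *ᵥ v)‖ ≤ (star v ⬝ᵥ v).re)
    (ρ : Matrix (Fin d) (Fin d) ℂ)
    (hρ : ρ = (1 - (ε : ℂ)) • vecMulVec ψ (star ψ)
      + (ε : ℂ) • ∑ k, (lam k : ℂ) • vecMulVec (ψk k) (star (ψk k)))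
    (n : ℕ) (hn : 1 ≤ n) :
    ‖(ρ ^ n * O).trace / (ρ ^ n).trace - star ψ ⬝ᵥ (O *ᵥ ψ)‖
      ≤ 2 * (ε / (1 - ε)) ^ n := by
  set v : Option ι → Fin d → ℂ := fun i => i.elim ψ ψk
  set c : Option ι → ℝ := fun i => i.elim (1 - ε) (ε * lam ·)
  have hv : ∀ i, star (v i) ⬝ᵥ v i = 1 := by rintro (_ | k) <;> simp [v, hψ, hψk]
  have hρc : ρ = ∑ i, (c i : ℂ) • vecMulVec (v i) (star (v i)) := by
    simp only [hρ, c, v, Fintype.sum_option, Option.elim, Finset.smul_sum, smul_smul,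
      Complex.ofReal_sub, Complex.ofReal_one, Complex.ofReal_mul]
  have hpow : ∀ M, (ρ ^ n * M).trace = ∑ i, ((c i ^ n : ℝ) : ℂ) * (star (v i) ⬝ᵥ (M *ᵥ v i)) := by
    intro M
    rw [hρc, (orthogonalIdempotents_vecMulVec_star hv
      (pairwise_star_dotProduct_option_elim hortho hortho')).sum_smul_pow _ (by omega),
      trace_sum_smul_vecMulVec_star_mul]
    simp only [Complex.ofReal_pow]
  have hden : (ρ ^ n).trace = ∑ i, ((c i ^ n : ℝ) : ℂ) := by
    rw [← mul_one (ρ ^ n), hpow]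
    simp [hv]
  have hε1 : 0 < 1 - ε := by linarith
  have hc : ∀ i, 0 ≤ c i := by
    rintro (_ | k)
    exacts [hε1.le, mul_nonneg hε.le (hlam k)]
  have hmass : ∑ k, c (some k) ^ n ≤ ε ^ n := by
    simp only [c, Option.elim, mul_pow, ← Finset.mul_sum]
    exact mul_le_of_le_one_right (by positivity) (sum_pow_le_one hlam hsum (by omega))
  rw [hpow, hden]
  calc _ ≤ 2 * (∑ k, c (some k) ^ n) / (1 - ε) ^ n :=
        norm_weighted_mean_sub_le (fun i => pow_nonneg (hc i) n) (pow_pos hε1 n)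
          fun i => by simpa [hv i] using hOnorm (v i)
    _ ≤ 2 * ε ^ n / (1 - ε) ^ n := by gcongr
    _ = 2 * (ε / (1 - ε)) ^ n := by rw [div_pow, mul_div_assoc]

/-- Virtual distillation: the error-mitigated expectation value converges to the
dominant-eigenvector expectation value exponentially in the number of copies `n`. -/
theorem stmt_0 {d : ℕ} {ι : Type*} [Fintype ι]
    (ε : ℝ) (hε : 0 < ε) (hε2 : ε < 1/2)
    (lam : ι → ℝ) (hlam : ∀ k, 0 ≤ lam k) (hsum : ∑ k, lam k = 1)
    (ψ : Fin d → ℂ) (ψk : ι → Fin d → ℂ)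
    (hψ : star ψ ⬝ᵥ ψ = 1)
    (hψk : ∀ k, star (ψk k) ⬝ᵥ ψk k = 1)
    (hortho : ∀ k, star ψ ⬝ᵥ ψk k = 0)
    (hortho' : ∀ k k', k ≠ k' → star (ψk k) ⬝ᵥ ψk k' = 0)
    (O : Matrix (Fin d) (Fin d) ℂ) (hO : O.IsHermitian)
    (hOnorm : ∀ v : Fin d → ℂ, ‖star v ⬝ᵥ (O *ᵥ v)‖ ≤ (star v ⬝ᵥ v).re)
    (ρ : Matrix (Fin d) (Fin d) ℂ)
    (hρ : ρ = (1 - (ε : ℂ)) • vecMulVec ψ (star ψ)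
      + (ε : ℂ) • ∑ k, (lam k : ℂ) • vecMulVec (ψk k) (star (ψk k)))
    (n : ℕ) (hn : 1 ≤ n) :
    ‖(ρ ^ n * O).trace / (ρ ^ n).trace - star ψ ⬝ᵥ (O *ᵥ ψ)‖
      ≤ 2 * (ε / (1 - ε)) ^ n :=
  stmt_0_general ε hε hε2 lam hlam hsum ψ ψk hψ hψk hortho hortho' O hOnorm ρ hρ n hn
end

section
/- Let ℰ be a channel on ℂ² ⊗ H whose Kraus operators K_i satisfy the factorization condition Tr_{D}[ℰ(σ)] = Σ_i c_i Tr[σ^D] · Tr_D[K_i(σ^R ⊗ I)K_i†] for product inputs σ = σ^R ⊗ σ^D, with constants c_i depending only on ℰ. Then for any unit vector u ∈ H and Hermitian unitary O on H, the probability p̃₀ = Tr[ℰ(ρ^fin)(|0⟩⟨0|⊗I)] with ρ^fin = ½(|+⟩⟨+|⊗u u† + |−⟩⟨−|⊗(Ou)(Ou)† + |+⟩⟨−|⊗u(Ou)† + |−⟩⟨+|⊗(Ou)u†) equals a + b·⟨u|O|u⟩, where a = ½Σ_i c_i Tr[K_iK_i†(|0⟩⟨0|⊗I)] and b = ½Σ_i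 c_i Tr[K_i(Z⊗I)K_i†(|0⟩⟨0|⊗I)] are independent of u. -/
open Matrix Kronecker BigOperators

/-- The ancilla state `|+⟩`. -/
noncomputable def plusv : Fin 2 → ℂ := fun _ => (Real.sqrt 2 : ℂ)⁻¹

/-- The ancilla state `|−⟩`. -/
noncomputable def minusv : Fin 2 → ℂ :=
  fun x => if x = 0 then (Real.sqrt 2 : ℂ)⁻¹ else -(Real.sqrt 2 : ℂ)⁻¹

/-- The projector `|0⟩⟨0|` on the ancilla qubit. -/
noncomputable def proj0 : Matrix (Fin 2) (Fin 2) ℂ := !![1, 0; 0, 0]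

noncomputable def σzM : Matrix (Fin 2) (Fin 2) ℂ := !![1, 0; 0, -1]

/-- Partial trace over the data system `H`, leaving the register qubit. -/
noncomputable def ptraceD {d : ℕ} (M : Matrix (Fin 2 × Fin d) (Fin 2 × Fin d) ℂ) :
    Matrix (Fin 2) (Fin 2) ℂ :=
  fun a b => ∑ j, M (a, j) (b, j)


lemma trace_mul_kron_one {d : ℕ} (M : Matrix (Fin 2 × Fin d) (Fin 2 × Fin d) ℂ)
    (P : Matrix (Fin 2) (Fin 2) ℂ) :
    (M * (P ⊗ₖ (1 : Matrix (Fin d) (Fin d) ℂ))).trace = (ptraceD M * P).trace := by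
  simp only [Matrix.trace, Matrix.diag, Matrix.mul_apply, ptraceD,
    kroneckerMap_apply, Matrix.one_apply, Fintype.sum_prod_type, mul_ite, mul_one, mul_zero,
    ite_mul, zero_mul, Finset.sum_ite_eq', Finset.mem_univ, if_true]
  refine Finset.sum_congr rfl fun a _ => ?_
  rw [Finset.sum_comm]
  simp [Finset.sum_mul]

lemma trace_vecMulVec {d : ℕ} (v w : Fin d → ℂ) : (vecMulVec v w).trace = w ⬝ᵥ v := by
  simp [Matrix.trace, vecMulVec, dotProduct, mul_comm]

lemma ptraceD_add {d : ℕ} (M N : Matrix (Fin 2 × Fin d) (Fin 2 × Fin d) ℂ) :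
    ptraceD (M + N) = ptraceD M + ptraceD N := by
  ext a b; simp [ptraceD, Finset.sum_add_distrib]

lemma ptraceD_smul {d : ℕ} (r : ℂ) (M : Matrix (Fin 2 × Fin d) (Fin 2 × Fin d) ℂ) :
    ptraceD (r • M) = r • ptraceD M := by
  ext a b; simp [ptraceD, Finset.mul_sum]

lemma sqrt2_aux : ((Real.sqrt 2 : ℂ))⁻¹ * ((Real.sqrt 2 : ℂ))⁻¹ = 1/2 := by
  rw [← mul_inv]
  norm_cast
  rw [Real.mul_self_sqrt (by norm_num)]
  norm_num

lemma star_sqrt2 : star ((Real.sqrt 2 : ℂ))⁻¹ = ((Real.sqrt 2 : ℂ))⁻¹ := by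
  simp [Complex.star_def, ← Complex.ofReal_inv]

lemma hsum1 : vecMulVec plusv (star plusv) + vecMulVec minusv (star minusv)
    = (1 : Matrix (Fin 2) (Fin 2) ℂ) := by
  ext i j
  fin_cases i <;> fin_cases j <;>
    simp [plusv, minusv, vecMulVec, Matrix.one_apply, Pi.star_apply, star_sqrt2, sqrt2_aux] <;>
    norm_num

lemma hsumZ : vecMulVec plusv (star minusv) + vecMulVec minusv (star plusv) = σzM := by
  ext i j
  fin_cases i <;> fin_cases j <;>
    simp [plusv, minusv, vecMulVec, σzM, Pi.star_apply, star_sqrt2, sqrt2_aux] <;>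
    norm_num

/-- Theorem 1 of the paper: if the effective noise does not entangle the register
with the data (factorization of the partial trace over the data system on product
inputs), then the noisy ancilla probability has the affine form `a + b⟨u|O|u⟩` with
state-independent coefficients `a`, `b`. -/
theorem stmt_19 {d : ℕ} {ι : Type*} [Fintype ι]
    (K : ι → Matrix (Fin 2 × Fin d) (Fin 2 × Fin d) ℂ) (c : ι → ℂ)
    (hfact : ∀ (σR : Matrix (Fin 2) (Fin 2) ℂ) (σD : Matrix (Fin d) (Fin d) ℂ),
      ptraceD (∑ i, K i * (σR ⊗ₖ σD) * (K i)ᴴ)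
        = ∑ i, (c i * σD.trace) •
            ptraceD (K i * (σR ⊗ₖ (1 : Matrix (Fin d) (Fin d) ℂ)) * (K i)ᴴ))
    (u : Fin d → ℂ) (hu : star u ⬝ᵥ u = 1)
    (O : Matrix (Fin d) (Fin d) ℂ) (hO : O.IsHermitian) (hO2 : O * O = 1)
    (ρfin : Matrix (Fin 2 × Fin d) (Fin 2 × Fin d) ℂ)
    (hρfin : ρfin = (1/2 : ℂ) • (
        (vecMulVec plusv (star plusv)) ⊗ₖ vecMulVec u (star u)
      + (vecMulVec minusv (star minusv)) ⊗ₖ vecMulVec (O *ᵥ u) (star (O *ᵥ u))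
      + (vecMulVec plusv (star minusv)) ⊗ₖ vecMulVec u (star (O *ᵥ u))
      + (vecMulVec minusv (star plusv)) ⊗ₖ vecMulVec (O *ᵥ u) (star u))) :
    (∑ i, K i * ρfin * (K i)ᴴ * (proj0 ⊗ₖ (1 : Matrix (Fin d) (Fin d) ℂ))).trace
      = (1/2) * ∑ i, c i * ((K i * (K i)ᴴ)
            * (proj0 ⊗ₖ (1 : Matrix (Fin d) (Fin d) ℂ))).trace
        + ((1/2) * ∑ i, c i * ((K i * (σzM ⊗ₖ (1 : Matrix (Fin d) (Fin d) ℂ)) * (K i)ᴴ)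
            * (proj0 ⊗ₖ (1 : Matrix (Fin d) (Fin d) ℂ))).trace)
          * (star u ⬝ᵥ (O *ᵥ u)) := by
  have hcross : star (O *ᵥ u) ⬝ᵥ u = star u ⬝ᵥ (O *ᵥ u) := by
    rw [star_mulVec, hO.eq, ← dotProduct_mulVec]
  have hnormO : star (O *ᵥ u) ⬝ᵥ (O *ᵥ u) = 1 := by
    rw [star_mulVec, hO.eq, ← dotProduct_mulVec, mulVec_mulVec, hO2, one_mulVec, hu]
  set s : ℂ := star u ⬝ᵥ (O *ᵥ u) with hs
  set P1 : Matrix (Fin 2) (Fin 2) ℂ := vecMulVec plusv (star plusv) with hP1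
  set P2 : Matrix (Fin 2) (Fin 2) ℂ := vecMulVec minusv (star minusv) with hP2
  set P3 : Matrix (Fin 2) (Fin 2) ℂ := vecMulVec plusv (star minusv) with hP3
  set P4 : Matrix (Fin 2) (Fin 2) ℂ := vecMulVec minusv (star plusv) with hP4
  set Q1 : Matrix (Fin d) (Fin d) ℂ := vecMulVec u (star u) with hQ1
  set Q2 : Matrix (Fin d) (Fin d) ℂ := vecMulVec (O *ᵥ u) (star (O *ᵥ u)) with hQ2
  set Q3 : Matrix (Fin d) (Fin d) ℂ := vecMulVec u (star (O *ᵥ u)) with hQ3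
  set Q4 : Matrix (Fin d) (Fin d) ℂ := vecMulVec (O *ᵥ u) (star u) with hQ4
  have hsumK : (∑ i, K i * ρfin * (K i)ᴴ)
      = (1/2 : ℂ) • ((∑ i, K i * (P1 ⊗ₖ Q1) * (K i)ᴴ) + (∑ i, K i * (P2 ⊗ₖ Q2) * (K i)ᴴ)
        + (∑ i, K i * (P3 ⊗ₖ Q3) * (K i)ᴴ) + (∑ i, K i * (P4 ⊗ₖ Q4) * (K i)ᴴ)) := by
    rw [hρfin]
    simp only [Matrix.mul_smul, Matrix.smul_mul, mul_add, add_mul, Finset.sum_add_distrib,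
      smul_add, Finset.smul_sum]
  have tQ1 : Q1.trace = 1 := by rw [hQ1, trace_vecMulVec, hu]
  have tQ2 : Q2.trace = 1 := by rw [hQ2, trace_vecMulVec, hnormO]
  have tQ3 : Q3.trace = s := by rw [hQ3, trace_vecMulVec, hcross]
  have tQ4 : Q4.trace = s := by rw [hQ4, trace_vecMulVec]
  have h12 : ∀ i : ι, ptraceD (K i * (K i)ᴴ)
      = ptraceD (K i * (P1 ⊗ₖ (1 : Matrix (Fin d) (Fin d) ℂ)) * (K i)ᴴ)
        + ptraceD (K i * (P2 ⊗ₖ (1 : Matrix (Fin d) (Fin d) ℂ)) * (K i)ᴴ) := by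
    intro i
    rw [← ptraceD_add, ← add_mul, ← mul_add, ← add_kronecker, hP1, hP2, hsum1,
      Matrix.one_kronecker_one, mul_one]
  have h34 : ∀ i : ι, ptraceD (K i * (σzM ⊗ₖ (1 : Matrix (Fin d) (Fin d) ℂ)) * (K i)ᴴ)
      = ptraceD (K i * (P3 ⊗ₖ (1 : Matrix (Fin d) (Fin d) ℂ)) * (K i)ᴴ)
        + ptraceD (K i * (P4 ⊗ₖ (1 : Matrix (Fin d) (Fin d) ℂ)) * (K i)ᴴ) := by
    intro i
    rw [← ptraceD_add, ← add_mul, ← mul_add, ← add_kronecker, hP3, hP4, hsumZ]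
  rw [← Finset.sum_mul, trace_mul_kron_one, hsumK, ptraceD_smul, ptraceD_add, ptraceD_add,
    ptraceD_add, hfact P1 Q1, hfact P2 Q2, hfact P3 Q3, hfact P4 Q4, tQ1, tQ2, tQ3, tQ4]
  simp only [trace_mul_kron_one, h12, h34]
  simp only [smul_mul_assoc, add_mul, Matrix.trace_smul, Matrix.trace_add, Finset.sum_mul,
    Matrix.trace_sum, smul_eq_mul, mul_one, mul_add, Finset.sum_add_distrib, Finset.mul_sum]
  have hpull : ∀ (f : ι → ℂ), ∑ x : ι, 1/2 * (c x * s * f x) = (∑ x : ι, 1/2 * (c x * f x)) * s := by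
    intro f
    rw [Finset.sum_mul]
    exact Finset.sum_congr rfl fun x _ => by ring
  rw [hpull, hpull]
  conv_rhs => rw [← Finset.sum_mul, ← Finset.sum_mul]
  ring
end
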